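/- arXiv:math/0502361 — 3 statements merged into one kernel-verified Lean document; each statement's English description precedes it below -/
import Mathlib

section
/- If the collinearity set Z = {p ∈ ℝ² : det(X(p), Y(p)) = 0} has an inverse component (i.e., a connected component Γ of Z \ {0} on which X and Y point in opposite directions), then the switched system q̇ = u X(q) + (1−u) Y(q), u ∈ [0,1], is not globally attractive at the origin: there exist a point p ∈ ℝ² and a measurable switching function u(·) such that γ(p,u(·),t) does not converge to the origin as t → ∞ (indeed, a constant switching value u₀ ∈ (0,1) exists for which the constant curve at p is an admissible trajectory). -/
open Set Filter Metric MeasureTheory Topology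
open scoped RealInnerProductSpace ENNReal

noncomputable section

/-- The Euclidean plane. -/
abbrev E2 : Type := EuclideanSpace ℝ (Fin 2)

/-- Determinant of the `2 × 2` matrix with columns `v` and `w`. -/
def det2 (v w : E2) : ℝ := v 0 * w 1 - v 1 * w 0

/-- `γ` is a (Carathéodory) solution of the switched system
`q̇ = u(t) • X(q) + (1 - u(t)) • Y(q)` on the time interval `[0, T)` (`T ∈ (0, ∞]`),
with measurable switching function `u` taking values in `U`. -/
def IsSwitchedSol (X Y : E2 → E2) (U : Set ℝ) (u : ℝ → ℝ) (γ : ℝ → E2) (T : ℝ≥0∞) :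
    Prop :=
  0 < T ∧ Measurable u ∧ (∀ t, u t ∈ U) ∧
    ContinuousOn γ {t : ℝ | 0 ≤ t ∧ ENNReal.ofReal t < T} ∧
    ∀ t : ℝ, 0 ≤ t → ENNReal.ofReal t < T →
      γ t = γ 0 + ∫ s in (0:ℝ)..t, (u s • X (γ s) + (1 - u s) • Y (γ s))

/-- A maximal solution: no solution with the same switching function and the same initial
point is defined on a strictly larger time interval. -/
def IsMaximalSol (X Y : E2 → E2) (U : Set ℝ) (u : ℝ → ℝ) (γ : ℝ → E2) (T : ℝ≥0∞) :
    Prop :=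
  IsSwitchedSol X Y U u γ T ∧
    ∀ (γ' : ℝ → E2) (T' : ℝ≥0∞), IsSwitchedSol X Y U u γ' T' → γ' 0 = γ 0 → T' ≤ T

/-- The accessible set from `p`: union over all admissible switching functions of the
images of the corresponding trajectories. -/
def Accessible (X Y : E2 → E2) (U : Set ℝ) (p : E2) : Set E2 :=
  {q | ∃ u γ T, IsSwitchedSol X Y U u γ T ∧ γ 0 = p ∧
        ∃ t : ℝ, 0 ≤ t ∧ ENNReal.ofReal t < T ∧ γ t = q}

/-- `γ : ℝ → E2` is a forward integral curve of the vector field `X`. -/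
def IsVFSol (X : E2 → E2) (γ : ℝ → E2) : Prop :=
  ∀ t : ℝ, 0 ≤ t → HasDerivAt γ (X (γ t)) t

/-- The vector field `X` is globally asymptotically stable at the origin: it is forward
complete, Lyapunov stable at the origin, and all forward integral curves converge to the
origin. -/
def VFGloballyAsymptoticallyStable (X : E2 → E2) : Prop :=
  (∀ p : E2, ∃ γ : ℝ → E2, γ 0 = p ∧ IsVFSol X γ) ∧
    (∀ δ > (0:ℝ), ∃ ε > (0:ℝ), ∀ γ : ℝ → E2, IsVFSol X γ → ‖γ 0‖ < ε →
      ∀ t ≥ (0:ℝ), ‖γ t‖ < δ) ∧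
    ∀ γ : ℝ → E2, IsVFSol X γ → Tendsto γ atTop (𝓝 (0 : E2))

/-- Uniform stability at the origin of the switched system. -/
def UnifStable (X Y : E2 → E2) (U : Set ℝ) : Prop :=
  ∀ δ > (0:ℝ), ∃ ε > (0:ℝ), ∀ p : E2, ‖p‖ < ε → Accessible X Y U p ⊆ ball (0 : E2) δ

/-- Global uniform attractivity at the origin of the switched system. -/
def GlobUnifAttractive (X Y : E2 → E2) (U : Set ℝ) : Prop :=
  ∀ δ₁ > (0:ℝ), ∀ δ₂ > (0:ℝ), ∃ T > (0:ℝ),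
    ∀ (u : ℝ → ℝ) (γ : ℝ → E2) (Tm : ℝ≥0∞), IsMaximalSol X Y U u γ Tm → ‖γ 0‖ < δ₂ →
      ENNReal.ofReal T < Tm ∧ γ T ∈ ball (0 : E2) δ₁

/-- Global uniform asymptotic stability (GUAS) at the origin. -/
def IsGUAS (X Y : E2 → E2) (U : Set ℝ) : Prop :=
  UnifStable X Y U ∧ GlobUnifAttractive X Y U

/-- Boundedness of the switched system. -/
def BoundedSystem (X Y : E2 → E2) (U : Set ℝ) : Prop :=
  ∀ K₁ : Set E2, IsCompact K₁ → ∃ K₂ : Set E2, IsCompact K₂ ∧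
    ∀ p ∈ K₁, Accessible X Y U p ⊆ K₂

/-- The switched system is unbounded: some maximal trajectory tends to infinity as `t`
tends to the maximal time. -/
def UnboundedSystem (X Y : E2 → E2) (U : Set ℝ) : Prop :=
  ∃ u γ T, IsMaximalSol X Y U u γ T ∧
    ((T = ⊤ ∧ Tendsto (fun t => ‖γ t‖) atTop atTop) ∨
      (T ≠ ⊤ ∧ Tendsto (fun t => ‖γ t‖) (𝓝[<] T.toReal) atTop))

/-- Global attractivity at the origin of the switched system. -/
def GloballyAttractive (X Y : E2 → E2) (U : Set ℝ) : Prop :=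
  ∀ (u : ℝ → ℝ) (γ : ℝ → E2) (Tm : ℝ≥0∞), IsMaximalSol X Y U u γ Tm →
    Tm = ⊤ ∧ Tendsto γ atTop (𝓝 (0 : E2))

/-- Local attractivity at the origin of the switched system. -/
def LocallyAttractive (X Y : E2 → E2) (U : Set ℝ) : Prop :=
  ∃ δ > (0:ℝ), ∀ (u : ℝ → ℝ) (γ : ℝ → E2) (Tm : ℝ≥0∞), IsMaximalSol X Y U u γ Tm →
    ‖γ 0‖ < δ → Tm = ⊤ ∧ Tendsto γ atTop (𝓝 (0 : E2))

/-- `Γ` is a connected component of `Z \ {0}`. -/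
def IsComponent (Z : Set E2) (Γ : Set E2) : Prop :=
  ∃ p ∈ Z \ {0}, Γ = connectedComponentIn (Z \ {0}) p

/-- `Γ` is an inverse component of `Z`: `X` and `Y` point in opposite directions along it. -/
def IsInverseComponent (X Y : E2 → E2) (Z : Set E2) (Γ : Set E2) : Prop :=
  IsComponent Z Γ ∧ ∀ p ∈ Γ, ∃ c < (0:ℝ), X p = c • Y p

/-- The Jacobian matrix of `X` at `p`. -/
def jacobianAt (X : E2 → E2) (p : E2) : Matrix (Fin 2) (Fin 2) ℝ :=
  Matrix.of fun i j => fderiv ℝ X p (EuclideanSpace.single j 1) i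

/-- The linear vector field associated with a `2 × 2` real matrix. -/
def matVF (A : Matrix (Fin 2) (Fin 2) ℝ) : E2 → E2 := fun q => Matrix.toEuclideanLin A q

/-- All (complex) eigenvalues of the real matrix `A` have strictly negative real part. -/
def EigenvaluesNegRealPart (A : Matrix (Fin 2) (Fin 2) ℝ) : Prop :=
  ∀ μ ∈ spectrum ℂ (A.map Complex.ofReal), μ.re < 0

/-- The Hessian of `Q` at `p` is non-degenerate. -/
def HessianNondegAt (Q : E2 → ℝ) (p : E2) : Prop :=
  ∀ v : E2, (∀ w : E2, fderiv ℝ (fderiv ℝ Q) p v w = 0) → v = 0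

/-- Proposition `p-mai-inverse`: if `Z` has an inverse component, then
the switched system is not globally attractive; indeed there is a point `p ≠ 0` and a
constant switching value `u₀ ∈ (0,1)` for which the constant curve at `p` is an
admissible trajectory, which does not converge to the origin. -/
theorem stmt_5 (X Y : E2 → E2)
    (hXsm : ContDiff ℝ (⊤ : ℕ∞) X) (hYsm : ContDiff ℝ (⊤ : ℕ∞) Y)
    (hX0 : X 0 = 0) (hY0 : Y 0 = 0)
    (hXgas : VFGloballyAsymptoticallyStable X)
    (hYgas : VFGloballyAsymptoticallyStable Y)
    (Γ : Set E2)
    (hΓ : IsInverseComponent X Y {p : E2 | det2 (X p) (Y p) = 0} Γ) :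
    ¬ GloballyAttractive X Y (Set.Icc 0 1) ∧
      ∃ p : E2, p ≠ 0 ∧ ∃ u₀ ∈ Set.Ioo (0:ℝ) 1,
        u₀ • X p + (1 - u₀) • Y p = 0 ∧
        IsSwitchedSol X Y (Set.Icc 0 1) (fun _ => u₀) (fun _ => p) ⊤ ∧
        ¬ Tendsto (fun _ : ℝ => p) atTop (𝓝 (0 : E2)) := by
  obtain ⟨⟨p, hpZ, hΓeq⟩, hinv⟩ := hΓ
  have hpΓ : p ∈ Γ := by
    rw [hΓeq]; exact mem_connectedComponentIn hpZ
  obtain ⟨c, hc, hXc⟩ := hinv p hpΓ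
  have hp0 : p ≠ 0 := hpZ.2
  set u₀ : ℝ := 1 / (1 - c) with hu₀
  have h1c : (0:ℝ) < 1 - c := by linarith
  have hu₀pos : 0 < u₀ := by positivity
  have hu₀lt : u₀ < 1 := by
    rw [hu₀, div_lt_one h1c]; linarith
  have hzero : u₀ • X p + (1 - u₀) • Y p = 0 := by
    rw [hXc, smul_smul, ← add_smul]
    have : u₀ * c + (1 - u₀) = 0 := by
      rw [hu₀]; linear_combination -(mul_one_div_cancel h1c.ne')
    rw [this, zero_smul]
  have hsol : IsSwitchedSol X Y (Set.Icc 0 1) (fun _ => u₀) (fun _ => p) ⊤ := by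
    refine ⟨ENNReal.zero_lt_top, measurable_const,
      fun t => ⟨le_of_lt hu₀pos, le_of_lt hu₀lt⟩, continuousOn_const, fun t ht hT => ?_⟩
    simp [hzero]
  have hnot : ¬ Tendsto (fun _ : ℝ => p) atTop (𝓝 (0 : E2)) := by
    intro h
    exact hp0 (tendsto_nhds_unique tendsto_const_nhds h)
  refine ⟨fun hGA => ?_, p, hp0, u₀, ⟨hu₀pos, hu₀lt⟩, hzero, hsol, hnot⟩
  have hmax : IsMaximalSol X Y (Set.Icc 0 1) (fun _ => u₀) (fun _ => p) ⊤ :=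
    ⟨hsol, fun _ _ _ _ => le_top⟩
  exact hnot (hGA _ _ _ hmax).2
end
end

section
/- Let Q(p) = det(X(p), Y(p)) and Z = Q⁻¹(0). Assume (G1) (for every p ≠ 0 with Q(p) = 0, ∇Q(p) ≠ 0), (G2) (the Hessian of Q at the origin is non-degenerate), that the origin is isolated in Z, and that Z \ {0} contains no tangency point. Then for every q ∈ ℝ², the positive integral curve t ↦ γ_X(q,t) of X starting at q intersects only finitely many connected components of Z \ {0}. -/
open Set Filter Metric MeasureTheory Topology
open scoped RealInnerProductSpace ENNReal

noncomputable section

/-- If a function vanishes at `t` and has nonzero derivative there, then it is nonzero on a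
punctured neighborhood of `t`. -/
lemma aux_isolated_zero {f : ℝ → ℝ} {t c : ℝ} (hf : HasDerivAt f c t) (hc : c ≠ 0)
    (hft : f t = 0) : ∀ᶠ s in 𝓝[≠] t, f s ≠ 0 := by
  have h := hasDerivAt_iff_tendsto_slope.mp hf
  filter_upwards [h.eventually_ne hc] with s hs h0
  apply hs
  simp [slope_def_field, hft, h0]

/-- under (G1), (G2), with the origin isolated in `Z` and no tangency
points on `Z \\ {0}`, every forward integral curve of `X` meets only finitely many
connected components of `Z \\ {0}` at positive times. -/
theorem stmt_12 (X Y : E2 → E2)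
    (hXsm : ContDiff ℝ (⊤ : ℕ∞) X) (hYsm : ContDiff ℝ (⊤ : ℕ∞) Y)
    (hX0 : X 0 = 0) (hY0 : Y 0 = 0)
    (hXgas : VFGloballyAsymptoticallyStable X)
    (hYgas : VFGloballyAsymptoticallyStable Y)
    (Q : E2 → ℝ) (hQ : ∀ p, Q p = det2 (X p) (Y p))
    (hG1 : ∀ p : E2, p ≠ 0 → Q p = 0 → gradient Q p ≠ 0)
    (hG2 : HessianNondegAt Q 0)
    (hIsol : ∃ ε > (0:ℝ), ∀ p : E2, ‖p‖ < ε → Q p = 0 → p = 0)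
    (hNoTang : ∀ p : E2, p ≠ 0 → Q p = 0 → (inner ℝ (gradient Q p) (X p) : ℝ) ≠ 0) :
    ∀ (q : E2) (γ : ℝ → E2), γ 0 = q → IsVFSol X γ →
      Set.Finite {Γ : Set E2 | IsComponent {p : E2 | Q p = 0} Γ ∧
        ∃ t : ℝ, 0 < t ∧ γ t ∈ Γ} := by
  classical
  intro q γ hγ0 hsol
  obtain ⟨ε, hε, hball⟩ := hIsol
  -- Q is smooth
  have hQeq : Q = fun p => (X p 0) * (Y p 1) - (X p 1) * (Y p 0) := funext fun p => hQ p
  have hQc : ContDiff ℝ (⊤ : ℕ∞) Q := by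
    rw [hQeq]
    exact (((EuclideanSpace.proj (0 : Fin 2)).contDiff.comp hXsm).mul
      ((EuclideanSpace.proj (1 : Fin 2)).contDiff.comp hYsm)).sub
      (((EuclideanSpace.proj (1 : Fin 2)).contDiff.comp hXsm).mul
      ((EuclideanSpace.proj (0 : Fin 2)).contDiff.comp hYsm))
  have hQd : ∀ p, DifferentiableAt ℝ Q p := fun p => (hQc.differentiable (by simp)) p
  have hQcont : Continuous Q := hQc.continuous
  -- the trajectory tends to the origin
  have htend : Tendsto γ atTop (𝓝 (0 : E2)) := hXgas.2.2 γ hsol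
  obtain ⟨T, hT⟩ : ∃ T : ℝ, ∀ t ≥ T, ‖γ t‖ < ε := by
    have := htend.eventually (Metric.eventually_nhds_iff_ball.mpr
      ⟨ε, hε, fun y hy => hy⟩)
    simp only [mem_ball, dist_zero_right] at this
    exact eventually_atTop.mp this
  -- the set of crossing times
  set A : Set ℝ := {t : ℝ | 0 ≤ t ∧ t ≤ T ∧ Q (γ t) = 0 ∧ γ t ≠ 0} with hA
  have hnorm : ∀ t ∈ A, ε ≤ ‖γ t‖ := by
    intro t ht
    by_contra h
    exact ht.2.2.2 (hball _ (lt_of_not_ge h) ht.2.2.1)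
  have hAt : ∀ t : ℝ, 0 < t → Q (γ t) = 0 → γ t ≠ 0 → t ∈ A := by
    intro t ht hQt hne
    refine ⟨le_of_lt ht, ?_, hQt, hne⟩
    by_contra h
    exact hne (hball _ (hT t (le_of_lt (lt_of_not_ge h))) hQt)
  have hγcont : ∀ t : ℝ, 0 ≤ t → ContinuousAt γ t := fun t ht => (hsol t ht).continuousAt
  -- derivative of Q ∘ γ at crossing times
  have hderiv : ∀ t ∈ A, HasDerivAt (fun s => Q (γ s))
      (inner ℝ (gradient Q (γ t)) (X (γ t)) : ℝ) t := by
    intro t ht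
    have h1 := hsol t ht.1
    have h2 := (hQd (γ t)).hasGradientAt.hasFDerivAt
    have h3 := h2.comp_hasDerivAt t h1
    simp only [Function.comp, InnerProductSpace.toDual_apply_apply] at h3
    exact h3
  -- A is closed
  have hAclosed : IsClosed A := by
    refine IsSeqClosed.isClosed ?_
    intro xs x hmem hlim
    have hx0 : (0:ℝ) ≤ x := ge_of_tendsto' hlim fun n => (hmem n).1
    have hxT : x ≤ T := le_of_tendsto' hlim fun n => (hmem n).2.1
    have hγx : Tendsto (fun n => γ (xs n)) atTop (𝓝 (γ x)) :=
      ((hγcont x hx0).tendsto).comp hlim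
    have hQx : Q (γ x) = 0 := by
      have h1 : Tendsto (fun n => Q (γ (xs n))) atTop (𝓝 (Q (γ x))) :=
        (hQcont.tendsto _).comp hγx
      have h2 : Tendsto (fun n => Q (γ (xs n))) atTop (𝓝 (0:ℝ)) := by
        simpa [(hmem _).2.2.1] using tendsto_const_nhds (α := ℝ) (f := atTop) (a := (0:ℝ))
      exact tendsto_nhds_unique h1 h2
    have hnx : ε ≤ ‖γ x‖ := by
      refine ge_of_tendsto' ((continuous_norm.tendsto _).comp hγx) fun n => hnorm _ (hmem n)
    exact ⟨hx0, hxT, hQx, fun h => by simp [h] at hnx; linarith⟩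
  -- A is compact
  have hAcomp : IsCompact A :=
    (isCompact_Icc (a := (0:ℝ)) (b := T)).of_isClosed_subset hAclosed
      fun t ht => ⟨ht.1, ht.2.1⟩
  -- A is discrete
  have hdisc : DiscreteTopology A := by
    rw [discreteTopology_subtype_iff]
    intro t ht
    have hc : (inner ℝ (gradient Q (γ t)) (X (γ t)) : ℝ) ≠ 0 :=
      hNoTang (γ t) ht.2.2.2 ht.2.2.1
    have hev := aux_isolated_zero (hderiv t ht) hc ht.2.2.1
    rw [inf_principal_eq_bot]
    filter_upwards [hev] with s hs hsA
    exact hs hsA.2.2.1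
  have hAfin : A.Finite := hAcomp.finite ⟨hdisc⟩
  -- inject components into crossing times
  set S : Set E2 := {p : E2 | Q p = 0} \ {0} with hS
  set F : Set E2 → ℝ := fun Γ => if h : ∃ t : ℝ, 0 < t ∧ γ t ∈ Γ then h.choose else 0 with hF
  have hFspec : ∀ Γ : Set E2, (∃ t : ℝ, 0 < t ∧ γ t ∈ Γ) → 0 < F Γ ∧ γ (F Γ) ∈ Γ := by
    intro Γ h
    simp only [hF, dif_pos h]
    exact h.choose_spec
  refine Set.Finite.of_finite_image (f := F) (hAfin.subset ?_) ?_
  · rintro x ⟨Γ, ⟨⟨p, hp, hΓ⟩, hex⟩, rfl⟩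
    subst hΓ
    obtain ⟨ht0, htΓ⟩ := hFspec _ hex
    have hmem := connectedComponentIn_subset _ _ htΓ
    exact hAt _ ht0 hmem.1 (fun h => hmem.2 h)
  · rintro Γ₁ ⟨⟨p₁, hp₁, hΓ₁⟩, hex₁⟩ Γ₂ ⟨⟨p₂, hp₂, hΓ₂⟩, hex₂⟩ heq
    subst hΓ₁; subst hΓ₂
    obtain ⟨ht01, htΓ1⟩ := hFspec _ hex₁
    obtain ⟨ht02, htΓ2⟩ := hFspec _ hex₂
    rw [heq] at htΓ1
    exact (connectedComponentIn_eq htΓ1).trans (connectedComponentIn_eq htΓ2).symm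
end
end

section
/- Let E = −201/200 − √401/200, A = [[−1/20, −1/E], [E, −1/20]], and B = [[−1/20, −1], [1, −1/20]]. Then the planar linear switched system q̇ = u A q + (1−u) B q, with measurable u : [0,∞) → [0,1], has collinearity set Z = {q : det(Aq, Bq) = 0} equal to the straight line y = −(20/(√401 − 1)) x, both components of Z \ {0} are inverse (Aq and Bq point in opposite directions there), and the switched system is globally uniformly stable (bounded and uniformly stable at the origin) but not globally attractive at the origin. -/
open Set Filter Metric MeasureTheory Topology
open scoped RealInnerProductSpace ENNReal

noncomputable section

/-- Coordinate formula for `matVF`, first coordinate. -/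
lemma matVF_apply0 (a b c d : ℝ) (q : E2) : matVF !![a,b;c,d] q 0 = a * q 0 + b * q 1 := by
  simp [matVF, Matrix.toEuclideanLin_apply, Matrix.mulVec, Fin.sum_univ_two, dotProduct, Matrix.vecHead, Matrix.vecTail]

/-- Coordinate formula for `matVF`, second coordinate. -/
lemma matVF_apply1 (a b c d : ℝ) (q : E2) : matVF !![a,b;c,d] q 1 = c * q 0 + d * q 1 := by
  simp [matVF, Matrix.toEuclideanLin_apply, Matrix.mulVec, Fin.sum_univ_two, dotProduct, Matrix.vecHead, Matrix.vecTail]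

lemma norm_sq_E2 (q : E2) : ‖q‖^2 = q 0^2 + q 1^2 := by
  rw [EuclideanSpace.norm_eq, Real.sq_sqrt (by positivity)]
  simp [Fin.sum_univ_two, sq_abs]

lemma coord_abs_le_norm (q : E2) (i : Fin 2) : |q i| ≤ ‖q‖ := by
  have h2 := norm_sq_E2 q
  have hi : i = 0 ∨ i = 1 := by fin_cases i <;> simp
  have hsq : q i^2 ≤ ‖q‖^2 := by
    rcases hi with h | h <;> subst h <;> nlinarith [sq_nonneg (q 0), sq_nonneg (q 1)]
  calc |q i| = Real.sqrt (q i^2) := (Real.sqrt_sq_eq_abs _).symm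
    _ ≤ Real.sqrt (‖q‖^2) := Real.sqrt_le_sqrt hsq
    _ = ‖q‖ := Real.sqrt_sq (norm_nonneg q)

set_option maxHeartbeats 1000000

lemma E2_ext (v w : E2) (h0 : v 0 = w 0) (h1 : v 1 = w 1) : v = w := by
  ext i
  fin_cases i
  exacts [h0, h1]

/-- Core analysis lemma: a quadratic form which is dissipated by every admissible convex
combination of the two vector fields is nonincreasing along every switched solution. -/
lemma V_mono (c0 c1 : ℝ) (hc0 : 0 ≤ c0) (hc1 : 0 ≤ c1)
    (X Y : E2 → E2) (hX : Continuous X) (hY : Continuous Y)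
    (hdiss : ∀ w : ℝ, 0 ≤ w → w ≤ 1 → ∀ q : E2,
      c0 * (q 0 * (w • X q + (1-w) • Y q) 0) + c1 * (q 1 * (w • X q + (1-w) • Y q) 1) ≤ 0)
    (u : ℝ → ℝ) (γ : ℝ → E2) (T : ℝ≥0∞)
    (hsol : IsSwitchedSol X Y (Set.Icc 0 1) u γ T)
    (t : ℝ) (ht : 0 ≤ t) (hT : ENNReal.ofReal t < T) :
    c0 * (γ t 0)^2 + c1 * (γ t 1)^2 ≤ c0 * (γ 0 0)^2 + c1 * (γ 0 1)^2 := by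
  obtain ⟨hTpos, hum, humem, hγc, heq⟩ := hsol
  rcases eq_or_lt_of_le ht with h0 | htpos
  · rw [← h0]
  set f : ℝ → E2 := fun s => u s • X (γ s) + (1 - u s) • Y (γ s) with hfdef
  have hsub : Icc 0 t ⊆ {r : ℝ | 0 ≤ r ∧ ENNReal.ofReal r < T} := fun r hr =>
    ⟨hr.1, lt_of_le_of_lt (ENNReal.ofReal_le_ofReal hr.2) hT⟩
  have hγct : ContinuousOn γ (Icc 0 t) := hγc.mono hsub
  obtain ⟨FX, hFX⟩ := isCompact_Icc.exists_bound_of_continuousOn (hX.comp_continuousOn hγct)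
  obtain ⟨FY, hFY⟩ := isCompact_Icc.exists_bound_of_continuousOn (hY.comp_continuousOn hγct)
  simp only [Function.comp] at hFX hFY
  set F : ℝ := FX + FY with hFdef
  have hFX0 : 0 ≤ FX := le_trans (norm_nonneg _) (hFX 0 ⟨le_refl _, ht⟩)
  have hFY0 : 0 ≤ FY := le_trans (norm_nonneg _) (hFY 0 ⟨le_refl _, ht⟩)
  have hF0 : 0 ≤ F := by positivity
  have hfb : ∀ r ∈ Icc 0 t, ‖f r‖ ≤ F := by
    intro r hr
    have hu := humem r
    have h1 : |u r| ≤ 1 := abs_le.2 ⟨by linarith [hu.1], hu.2⟩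
    have h2 : |1 - u r| ≤ 1 := abs_le.2 ⟨by linarith [hu.2], by linarith [hu.1]⟩
    calc ‖f r‖ ≤ ‖u r • X (γ r)‖ + ‖(1 - u r) • Y (γ r)‖ := norm_add_le _ _
      _ = |u r| * ‖X (γ r)‖ + |1 - u r| * ‖Y (γ r)‖ := by
          rw [norm_smul, norm_smul, Real.norm_eq_abs, Real.norm_eq_abs]
      _ ≤ 1 * FX + 1 * FY := by
          have hx := hFX r hr
          have hy := hFY r hr
          have := norm_nonneg (X (γ r))
          have := norm_nonneg (Y (γ r))
          have := abs_nonneg (u r)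
          have := abs_nonneg (1 - u r)
          nlinarith
      _ = F := by ring
  have hfm : AEStronglyMeasurable f (volume.restrict (Icc 0 t)) := by
    have hγm : AEStronglyMeasurable γ (volume.restrict (Icc 0 t)) :=
      hγct.aestronglyMeasurable measurableSet_Icc
    exact ((hum.aestronglyMeasurable).smul (hX.comp_aestronglyMeasurable hγm)).add
      (((measurable_const.sub hum).aestronglyMeasurable).smul (hY.comp_aestronglyMeasurable hγm))
  have hfint : IntegrableOn f (Icc 0 t) volume :=
    Integrable.mono' (integrableOn_const measure_Icc_lt_top.ne) hfm
      ((ae_restrict_iff' measurableSet_Icc).2 (Filter.Eventually.of_forall hfb))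
  have hii : ∀ a b : ℝ, a ∈ Icc 0 t → b ∈ Icc 0 t → IntervalIntegrable f volume a b :=
    fun a b ha hb => (hfint.mono_set (uIcc_subset_Icc ha hb)).intervalIntegrable
  have hdiff : ∀ a b : ℝ, a ∈ Icc 0 t → b ∈ Icc 0 t →
      γ b - γ a = ∫ s in a..b, f s := by
    intro a b ha hb
    rw [heq a ha.1 (hsub ha).2, heq b hb.1 (hsub hb).2]
    have h := intervalIntegral.integral_interval_sub_left (hii 0 b (left_mem_Icc.2 ht) hb)
      (hii 0 a (left_mem_Icc.2 ht) ha)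
    rw [← h]; abel
  have hlip : ∀ a b : ℝ, a ∈ Icc 0 t → b ∈ Icc 0 t → a ≤ b →
      ‖γ b - γ a‖ ≤ F * (b - a) := by
    intro a b ha hb hab
    rw [hdiff a b ha hb]
    have h := intervalIntegral.norm_integral_le_of_norm_le_const (C := F) (f := f)
      (a := a) (b := b) ?_
    · rwa [abs_of_nonneg (by linarith)] at h
    · intro x hx
      rw [uIoc_of_le hab] at hx
      exact hfb x ⟨le_trans ha.1 hx.1.le, le_trans hx.2 hb.2⟩
  set K : ℝ := (c0 + c1) * F^2 with hKdef
  have hK0 : 0 ≤ K := by positivity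
  have key : ∀ a b : ℝ, a ∈ Icc 0 t → b ∈ Icc 0 t → a ≤ b →
      c0 * (γ b 0)^2 + c1 * (γ b 1)^2 ≤ c0 * (γ a 0)^2 + c1 * (γ a 1)^2 + K * (b - a)^2 := by
    intro a b ha hb hab
    set L : E2 →L[ℝ] ℝ := (c0 * (γ a 0 + γ b 0)) • EuclideanSpace.proj (0 : Fin 2)
       + (c1 * (γ a 1 + γ b 1)) • EuclideanSpace.proj (1 : Fin 2) with hLdef
    have hL : ∀ v : E2, L v = c0 * (γ a 0 + γ b 0) * v 0 + c1 * (γ a 1 + γ b 1) * v 1 := by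
      intro v
      simp only [hLdef, ContinuousLinearMap.add_apply, ContinuousLinearMap.smul_apply,
        smul_eq_mul]
      rfl
    have hVdiff : c0 * (γ b 0)^2 + c1 * (γ b 1)^2 - (c0 * (γ a 0)^2 + c1 * (γ a 1)^2)
        = L (γ b - γ a) := by
      rw [hL]
      simp only [PiLp.sub_apply]
      ring
    have hint : L (γ b - γ a) = ∫ s in a..b, L (f s) := by
      rw [hdiff a b ha hb, L.intervalIntegral_comp_comm (hii a b ha hb)]
    have hbound : ∀ s ∈ Icc a b, L (f s) ≤ K * (b - a) := by
      intro s hs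
      have hsI : s ∈ Icc 0 t := ⟨le_trans ha.1 hs.1, le_trans hs.2 hb.2⟩
      set dv : E2 := (γ a - γ s) + (γ b - γ s) with hdv
      have hdvn : ‖dv‖ ≤ F * (b - a) := by
        have l1 : ‖γ a - γ s‖ ≤ F * (s - a) := by
          rw [norm_sub_rev]; exact hlip a s ha hsI hs.1
        have l2 : ‖γ b - γ s‖ ≤ F * (b - s) := hlip s b hsI hb hs.2
        calc ‖dv‖ ≤ ‖γ a - γ s‖ + ‖γ b - γ s‖ := norm_add_le _ _
          _ ≤ F * (s - a) + F * (b - s) := add_le_add l1 l2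
          _ = F * (b - a) := by ring
      have hsplit : L (f s) = 2 * (c0 * (γ s 0 * f s 0) + c1 * (γ s 1 * f s 1))
          + (c0 * (dv 0 * f s 0) + c1 * (dv 1 * f s 1)) := by
        rw [hL]
        simp only [hdv, PiLp.add_apply, PiLp.sub_apply]
        ring
      have h1 : c0 * (γ s 0 * f s 0) + c1 * (γ s 1 * f s 1) ≤ 0 :=
        hdiss (u s) (humem s).1 (humem s).2 (γ s)
      have h2 : c0 * (dv 0 * f s 0) + c1 * (dv 1 * f s 1) ≤ K * (b - a) := by
        have e0 : |dv 0| ≤ ‖dv‖ := coord_abs_le_norm dv 0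
        have e1 : |dv 1| ≤ ‖dv‖ := coord_abs_le_norm dv 1
        have g0 : |f s 0| ≤ ‖f s‖ := coord_abs_le_norm (f s) 0
        have g1 : |f s 1| ≤ ‖f s‖ := coord_abs_le_norm (f s) 1
        have hfs : ‖f s‖ ≤ F := hfb s hsI
        have hfs0 : 0 ≤ ‖f s‖ := norm_nonneg _
        have hdv0 : 0 ≤ ‖dv‖ := norm_nonneg _
        have t0 : dv 0 * f s 0 ≤ (F * (b-a)) * F := by
          calc dv 0 * f s 0 ≤ |dv 0| * |f s 0| := by rw [← abs_mul]; exact le_abs_self _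
            _ ≤ (F * (b-a)) * F := by
                have := abs_nonneg (dv 0)
                have := abs_nonneg (f s 0)
                nlinarith
        have t1 : dv 1 * f s 1 ≤ (F * (b-a)) * F := by
          calc dv 1 * f s 1 ≤ |dv 1| * |f s 1| := by rw [← abs_mul]; exact le_abs_self _
            _ ≤ (F * (b-a)) * F := by
                have := abs_nonneg (dv 1)
                have := abs_nonneg (f s 1)
                nlinarith
        calc c0 * (dv 0 * f s 0) + c1 * (dv 1 * f s 1)
            ≤ c0 * ((F * (b-a)) * F) + c1 * ((F * (b-a)) * F) :=
              add_le_add (mul_le_mul_of_nonneg_left t0 hc0) (mul_le_mul_of_nonneg_left t1 hc1)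
          _ = K * (b - a) := by rw [hKdef]; ring
      calc L (f s) = 2 * (c0 * (γ s 0 * f s 0) + c1 * (γ s 1 * f s 1))
          + (c0 * (dv 0 * f s 0) + c1 * (dv 1 * f s 1)) := hsplit
        _ ≤ 2 * 0 + K * (b - a) := add_le_add (by linarith) h2
        _ = K * (b - a) := by ring
    have hLint : IntervalIntegrable (fun s => L (f s)) volume a b := by
      have h2 : IntegrableOn (fun s => L (f s)) (uIcc a b) volume :=
        L.integrable_comp (hfint.mono_set (uIcc_subset_Icc ha hb))
      exact h2.intervalIntegrable
    have hmono : ∫ s in a..b, L (f s) ≤ ∫ _ in a..b, K * (b - a) :=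
      intervalIntegral.integral_mono_on hab hLint intervalIntegrable_const hbound
    rw [intervalIntegral.integral_const, smul_eq_mul] at hmono
    nlinarith [hVdiff, hint, hmono]
  have iter : ∀ n : ℕ, 0 < n → ∀ k : ℕ, k ≤ n →
      c0 * (γ (k * t / n) 0)^2 + c1 * (γ (k * t / n) 1)^2
        ≤ c0 * (γ 0 0)^2 + c1 * (γ 0 1)^2 + k * (K * (t / n)^2) := by
    intro n hn k
    induction k with
    | zero => intro _; simp
    | succ k ih =>
      intro hk
      have hk' : k ≤ n := Nat.le_of_succ_le hk
      have ihh := ih hk'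
      have hnn : (0:ℝ) < n := Nat.cast_pos.2 hn
      have hkn : (k:ℝ) ≤ n := Nat.cast_le.2 hk'
      have hkn1 : (k:ℝ) + 1 ≤ n := by
        have h' := (Nat.cast_le (α := ℝ)).2 hk; push_cast at h'; linarith
      have haI : (k * t / n : ℝ) ∈ Icc 0 t := by
        constructor
        · positivity
        · rw [div_le_iff₀ hnn]; nlinarith
      have hbI : ((k+1 : ℕ) * t / n : ℝ) ∈ Icc 0 t := by
        constructor
        · positivity
        · rw [div_le_iff₀ hnn]; push_cast; nlinarith
      have hab : (k * t / n : ℝ) ≤ (k+1 : ℕ) * t / n := by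
        rw [div_le_div_iff₀ hnn hnn]
        push_cast
        nlinarith
      have hba : ((k+1:ℕ) * t / n : ℝ) - k * t / n = t / n := by
        push_cast; field_simp; ring
      have hkey := key _ _ haI hbI hab
      rw [hba] at hkey
      push_cast at ihh hkey ⊢
      linarith
  have final : ∀ n : ℕ, 0 < n →
      c0 * (γ t 0)^2 + c1 * (γ t 1)^2 ≤ c0 * (γ 0 0)^2 + c1 * (γ 0 1)^2 + K * t^2 / n := by
    intro n hn
    have hnn : (0:ℝ) < n := Nat.cast_pos.2 hn
    have h := iter n hn n le_rfl
    have hnt : (n : ℝ) * t / n = t := by field_simp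
    rw [hnt] at h
    have heq2 : (n:ℝ) * (K * (t/n)^2) = K * t^2 / n := by field_simp
    linarith
  apply le_of_forall_pos_le_add
  intro ε hε
  obtain ⟨n, hn⟩ := exists_nat_gt (K * t^2 / ε)
  have hge : (0:ℝ) ≤ K * t^2 / ε := by positivity
  have hnn : (0:ℝ) < n := lt_of_le_of_lt hge hn
  have hn0 : 0 < n := Nat.cast_pos.1 hnn
  have hlt : K * t^2 / n < ε := by
    rw [div_lt_iff₀ hnn]
    have := (div_lt_iff₀ hε).1 hn
    linarith
  linarith [final n hn0]


/-- final Remark of the paper: for the explicit matrices `A` and `B`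
below, the collinearity set of the linear switched system is the line
`y = -(20/(√401 - 1)) x`, both components of `Z \\ {0}` are inverse, and the system is
globally uniformly stable (bounded and uniformly stable) but not globally attractive. -/
theorem stmt_14 (e : ℝ) (he : e = -201/200 - Real.sqrt 401 / 200)
    (A B : Matrix (Fin 2) (Fin 2) ℝ)
    (hA : A = !![-1/20, -1/e; e, -1/20])
    (hB : B = !![-1/20, -1; 1, -1/20]) :
    ({q : E2 | det2 (matVF A q) (matVF B q) = 0} =
      {q : E2 | q 1 = -(20 / (Real.sqrt 401 - 1)) * q 0}) ∧
    (∀ q : E2, q ≠ 0 → det2 (matVF A q) (matVF B q) = 0 →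
      ∃ c < (0:ℝ), matVF A q = c • matVF B q) ∧
    BoundedSystem (matVF A) (matVF B) (Set.Icc 0 1) ∧
    UnifStable (matVF A) (matVF B) (Set.Icc 0 1) ∧
    ¬ GloballyAttractive (matVF A) (matVF B) (Set.Icc 0 1) := by
  have h400 : Real.sqrt 400 = 20 := by
    rw [show (400:ℝ) = 20^2 by norm_num, Real.sqrt_sq (by norm_num)]
  have hs2 : Real.sqrt 401 ^ 2 = 401 := Real.sq_sqrt (by norm_num)
  have hs20 : (20:ℝ) < Real.sqrt 401 := by
    rw [← h400]; exact Real.sqrt_lt_sqrt (by norm_num) (by norm_num)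
  set s : ℝ := Real.sqrt 401 with hsdef
  obtain ⟨m, hmdef⟩ : ∃ m : ℝ, m = (1 + s)/20 := ⟨_, rfl⟩
  have hm1 : 1 < m := by rw [hmdef]; linarith
  have hm0 : 0 < m := by linarith
  have hmne : m ≠ 0 := ne_of_gt hm0
  have hm2 : m^2 = m/10 + 1 := by rw [hmdef]; linear_combination hs2/400
  have he' : e = -m^2 := by rw [he, hmdef]; linear_combination (1/400) * hs2
  have hslope : -(20 / (s - 1)) = -m := by
    have h1 : s - 1 ≠ 0 := by intro h; nlinarith
    rw [hmdef]
    field_simp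
    linear_combination hs2
  subst hA hB
  -- factorization of the collinearity determinant
  have hfact : ∀ q : E2, det2 (matVF !![-1/20, -1/e; e, -1/20] q)
      (matVF !![-1/20, -1; 1, -1/20] q) = -((1+m^2)/(20*m^2)) * (q 1 + m * q 0)^2 := by
    intro q
    rw [det2, matVF_apply0, matVF_apply1, matVF_apply0, matVF_apply1, he']
    field_simp
    linear_combination (-400*(m^2+1) * q 0 * q 1) * hm2
  have hcoefneg : -((1+m^2)/(20*m^2)) < 0 := by
    have : 0 < (1+m^2)/(20*m^2) := by positivity
    linarith
  have hline : ∀ q : E2, det2 (matVF !![-1/20, -1/e; e, -1/20] q)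
      (matVF !![-1/20, -1; 1, -1/20] q) = 0 → q 1 + m * q 0 = 0 := by
    intro q h
    rw [hfact q] at h
    rcases mul_eq_zero.1 h with h' | h'
    · exact absurd h' (ne_of_lt hcoefneg)
    · exact (pow_eq_zero_iff two_ne_zero).1 h'
  -- continuity of the two linear fields
  have hcontA : Continuous (matVF !![-1/20, -1/e; e, -1/20]) := by
    show Continuous fun q : E2 => Matrix.toEuclideanLin !![-1/20, -1/e; e, -1/20] q
    exact LinearMap.continuous_of_finiteDimensional _
  have hcontB : Continuous (matVF !![-1/20, -1; 1, -1/20]) := by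
    show Continuous fun q : E2 => Matrix.toEuclideanLin !![-1/20, -1; 1, -1/20] q
    exact LinearMap.continuous_of_finiteDimensional _
  -- common Lyapunov dissipation identity
  have hcomb : ∀ w : ℝ, ∀ q : E2,
      1 * (q 0 * (w • matVF !![-1/20, -1/e; e, -1/20] q
          + (1-w) • matVF !![-1/20, -1; 1, -1/20] q) 0)
      + 1/m^2 * (q 1 * (w • matVF !![-1/20, -1/e; e, -1/20] q
          + (1-w) • matVF !![-1/20, -1; 1, -1/20] q) 1)
      = -((m * q 0 + q 1)^2/(20*m^2)) := by
    intro w q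
    simp only [PiLp.add_apply, PiLp.smul_apply, smul_eq_mul, matVF_apply0, matVF_apply1, he']
    field_simp
    linear_combination (-20 * q 0 * q 1) * hm2
  have hdiss : ∀ w : ℝ, 0 ≤ w → w ≤ 1 → ∀ q : E2,
      1 * (q 0 * (w • matVF !![-1/20, -1/e; e, -1/20] q
          + (1-w) • matVF !![-1/20, -1; 1, -1/20] q) 0)
      + 1/m^2 * (q 1 * (w • matVF !![-1/20, -1/e; e, -1/20] q
          + (1-w) • matVF !![-1/20, -1; 1, -1/20] q) 1) ≤ 0 := by
    intro w h0 h1 q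
    rw [hcomb w q]
    have : 0 ≤ (m * q 0 + q 1)^2/(20*m^2) := by positivity
    linarith
  -- the key accessibility bound
  have hacc : ∀ p : E2, ∀ q ∈ Accessible (matVF !![-1/20, -1/e; e, -1/20])
      (matVF !![-1/20, -1; 1, -1/20]) (Set.Icc 0 1) p, ‖q‖ ≤ m * ‖p‖ := by
    intro p q hq
    obtain ⟨u, γ, T, hsol, hγ0, t, ht, hT, hγt⟩ := hq
    have hV := V_mono 1 (1/m^2) (by norm_num) (by positivity) _ _ hcontA hcontB hdiss
      u γ T hsol t ht hT
    rw [hγ0, hγt] at hV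
    have hq' : ‖q‖^2 ≤ m^2 * (1*(q 0)^2 + 1/m^2*(q 1)^2) := by
      rw [norm_sq_E2]
      have h1 : m^2 * (1*(q 0)^2 + 1/m^2*(q 1)^2) = m^2*(q 0)^2 + (q 1)^2 := by
        field_simp
      rw [h1]
      nlinarith [sq_nonneg (q 0)]
    have hp' : 1*(p 0)^2 + 1/m^2*(p 1)^2 ≤ ‖p‖^2 := by
      rw [norm_sq_E2]
      have h2 : 1/m^2*(p 1)^2 ≤ (p 1)^2 := by
        apply mul_le_of_le_one_left (sq_nonneg _)
        rw [div_le_one (by positivity)]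
        nlinarith
      linarith
    have hsq : ‖q‖^2 ≤ (m * ‖p‖)^2 := by
      have h3 := mul_le_mul_of_nonneg_left hV (le_of_lt (by positivity : (0:ℝ) < m^2))
      have h4 := mul_le_mul_of_nonneg_left hp' (le_of_lt (by positivity : (0:ℝ) < m^2))
      calc ‖q‖^2 ≤ m^2 * (1*(q 0)^2 + 1/m^2*(q 1)^2) := hq'
        _ ≤ m^2 * (1*(p 0)^2 + 1/m^2*(p 1)^2) := h3
        _ ≤ m^2 * ‖p‖^2 := h4
        _ = (m * ‖p‖)^2 := by ring
    calc ‖q‖ = Real.sqrt (‖q‖^2) := (Real.sqrt_sq (norm_nonneg q)).symm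
      _ ≤ Real.sqrt ((m * ‖p‖)^2) := Real.sqrt_le_sqrt hsq
      _ = m * ‖p‖ := Real.sqrt_sq (by positivity)
  refine ⟨?_, ?_, ?_, ?_, ?_⟩
  · -- collinearity set is the line
    ext q
    simp only [mem_setOf_eq]
    constructor
    · intro h
      have h2 := hline q h
      rw [hslope]
      linarith
    · intro h
      rw [hfact q, h, hslope]
      ring
  · -- both components are inverse
    intro q hq hdet
    refine ⟨-1, by norm_num, ?_⟩
    have h2 := hline q hdet
    have hq1 : q 1 = -(m * q 0) := by linarith
    apply E2_ext
    · simp only [PiLp.smul_apply, smul_eq_mul, matVF_apply0, he', hq1]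
      field_simp
      linear_combination (20 * q 0) * hm2
    · simp only [PiLp.smul_apply, smul_eq_mul, matVF_apply1, he', hq1]
      linear_combination (-(q 0)) * hm2
  · -- BoundedSystem
    intro K₁ hK₁
    obtain ⟨R, hR⟩ := hK₁.isBounded.subset_closedBall (0 : E2)
    refine ⟨closedBall 0 (m * max R 0), isCompact_closedBall _ _, ?_⟩
    intro p hp q hq
    rw [mem_closedBall_zero_iff]
    have hpR : ‖p‖ ≤ max R 0 := le_trans (mem_closedBall_zero_iff.1 (hR hp)) (le_max_left _ _)
    calc ‖q‖ ≤ m * ‖p‖ := hacc p q hq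
      _ ≤ m * max R 0 := mul_le_mul_of_nonneg_left hpR (le_of_lt hm0)
  · -- UnifStable
    intro δ hδ
    refine ⟨δ/m, by positivity, ?_⟩
    intro p hp q hq
    rw [mem_ball_zero_iff]
    calc ‖q‖ ≤ m * ‖p‖ := hacc p q hq
      _ < m * (δ/m) := mul_lt_mul_of_pos_left hp hm0
      _ = δ := by field_simp
  · -- not globally attractive
    intro hGA
    set p : E2 := (WithLp.equiv 2 (Fin 2 → ℝ)).symm ![1, -m] with hpdef
    have hp0 : p 0 = 1 := by
      simp [hpdef, WithLp.equiv_symm_apply]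
    have hp1 : p 1 = -m := by
      simp [hpdef, WithLp.equiv_symm_apply]
    have hsum : (1/2 : ℝ) • matVF !![-1/20, -1/e; e, -1/20] p
        + (1 - (1/2 : ℝ)) • matVF !![-1/20, -1; 1, -1/20] p = (0 : E2) := by
      apply E2_ext
      · simp only [PiLp.add_apply, PiLp.smul_apply, PiLp.zero_apply, smul_eq_mul,
          matVF_apply0, he', hp0, hp1]
        field_simp
        linear_combination (20) * hm2
      · simp only [PiLp.add_apply, PiLp.smul_apply, PiLp.zero_apply, smul_eq_mul,
          matVF_apply1, he', hp0, hp1]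
        linear_combination (-1/2) * hm2
    have hsol : IsSwitchedSol (matVF !![-1/20, -1/e; e, -1/20])
        (matVF !![-1/20, -1; 1, -1/20]) (Set.Icc 0 1) (fun _ => 1/2) (fun _ => p) ⊤ := by
      refine ⟨by simp, measurable_const, fun t => by norm_num, continuousOn_const, ?_⟩
      intro t ht hT
      show p = p + ∫ _ in (0:ℝ)..t, ((1/2 : ℝ) • matVF !![-1/20, -1/e; e, -1/20] p
        + (1 - (1/2 : ℝ)) • matVF !![-1/20, -1; 1, -1/20] p)
      rw [intervalIntegral.integral_const, hsum, smul_zero, add_zero]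
    have hmax : IsMaximalSol (matVF !![-1/20, -1/e; e, -1/20])
        (matVF !![-1/20, -1; 1, -1/20]) (Set.Icc 0 1) (fun _ => 1/2) (fun _ => p) ⊤ :=
      ⟨hsol, fun γ' T' _ _ => le_top⟩
    obtain ⟨-, htend⟩ := hGA _ _ _ hmax
    have hp_eq : p = 0 := tendsto_nhds_unique tendsto_const_nhds htend
    have : (1:ℝ) = 0 := by
      rw [← hp0, hp_eq]
      rfl
    norm_num at this


end
end
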